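/- arXiv:2102.07547 — 5 statements merged into one kernel-verified Lean document; each statement's English description precedes it below -/
import Mathlib

section
/- Let B be the orthonormal basis of u(n) given by B = { (E_{rs}−E_{sr})/√2, i(E_{rs}+E_{sr})/√2 : 1 ≤ r < s ≤ n } ∪ { i E_{tt} : 1 ≤ t ≤ n }. Then for every A ∈ ℂ^{n×n}, ∑_{Z ∈ B} Z · A · Zᵀ = −Aᵀ. -/
/-!
Since `E_rs A E_cd = A_sc E_rd`, each basis element contributes a multiple of elementary
matrices. For `r < s` the two basis elements built from `E_rs ∓ E_sr` produce the same terms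
`A_ss E_rr + A_rr E_ss` up to the sign `i² = -1`, so these cancel and the pair contributes
`-(A_sr E_rs + A_rs E_sr)`; the element `i E_tt` contributes `-A_tt E_tt`. Summed over all
index pairs this is `-∑ A_sr E_rs = -Aᵀ`.
-/

open Matrix

theorem Fintype.sum_prod_eq_sum_lt_add_sum_diag {ι M : Type*} [Fintype ι] [LinearOrder ι]
    [AddCommMonoid M] (g : ι × ι → M) :
    ∑ p, g p = ∑ p with p.1 < p.2, (g p + g p.swap) + ∑ t, g (t, t) := by
  have htrichotomy : ∀ p : ι × ι, g p = ((if p.1 < p.2 then g p else 0) +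
      (if p.2 < p.1 then g p else 0)) + (if p.1 = p.2 then g p else 0) := by
    rintro ⟨a, b⟩
    rcases lt_trichotomy a b with h | rfl | h
    · simp [h, h.not_gt, h.ne]
    · simp
    · simp [h, h.not_gt, h.ne']
  have hswap : ∑ p : ι × ι, (if p.2 < p.1 then g p else 0) =
      ∑ p : ι × ι, if p.1 < p.2 then g p.swap else 0 :=
    Fintype.sum_equiv (Equiv.prodComm ι ι) _ _ fun _ => rfl
  have hdiag : ∑ p : ι × ι, (if p.1 = p.2 then g p else 0) = ∑ t, g (t, t) := by
    simp [Fintype.sum_prod_type]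
  rw [Fintype.sum_congr _ _ htrichotomy, Finset.sum_add_distrib, Finset.sum_add_distrib, hswap,
    hdiag, ← Finset.sum_filter, ← Finset.sum_filter, ← Finset.sum_add_distrib]

namespace Matrix

variable {n : Type*} [Fintype n] [DecidableEq n]

theorem transpose_eq_sum_single {α : Type*} [AddCommMonoid α] (A : Matrix n n α) :
    Aᵀ = ∑ p : n × n, single p.1 p.2 (A p.2 p.1) := by
  conv_lhs => rw [matrix_eq_sum_single Aᵀ]
  rw [Fintype.sum_prod_type]
  rfl

section CommRing

variable {R : Type*} [CommRing R]

theorem smul_mul_mul_transpose_smul (c : R) (X A : Matrix n n R) :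
    (c • X) * A * (c • X)ᵀ = (c * c) • (X * A * Xᵀ) := by
  rw [transpose_smul, smul_mul_assoc, smul_mul_assoc, mul_smul_comm, smul_smul]

theorem sandwich_single_sub_sub_sandwich_single_add (A : Matrix n n R) (r s : n) :
    (single r s 1 - single s r 1) * A * (single r s 1 - single s r 1)ᵀ
      - (single r s 1 + single s r 1) * A * (single r s 1 + single s r 1)ᵀ
      = -(2 : R) • (single r s (A s r) + single s r (A r s)) := by
  simp only [transpose_sub, transpose_add, transpose_single, sub_mul, mul_sub, add_mul, mul_add,
    single_mul_mul_single, one_mul, mul_one]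
  module

end CommRing

theorem sandwich_unitary_offDiag_pair (A : Matrix n n ℂ) (r s : n) :
    ((Real.sqrt 2 : ℂ)⁻¹ • (single r s (1 : ℂ) - single s r (1 : ℂ))) * A *
        ((Real.sqrt 2 : ℂ)⁻¹ • (single r s (1 : ℂ) - single s r (1 : ℂ)))ᵀ
      + ((Real.sqrt 2 : ℂ)⁻¹ • Complex.I • (single r s (1 : ℂ) + single s r (1 : ℂ))) * A *
        ((Real.sqrt 2 : ℂ)⁻¹ • Complex.I • (single r s (1 : ℂ) + single s r (1 : ℂ)))ᵀ
      = -(single r s (A s r) + single s r (A r s)) := by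
  have hsq : (Real.sqrt 2 : ℂ)⁻¹ * (Real.sqrt 2 : ℂ)⁻¹ = 2⁻¹ := by
    rw [← mul_inv, ← Complex.ofReal_mul, Real.mul_self_sqrt zero_le_two]
    norm_num
  rw [smul_smul, smul_mul_mul_transpose_smul, smul_mul_mul_transpose_smul, mul_mul_mul_comm, hsq,
    Complex.I_mul_I, mul_neg_one, neg_smul, ← sub_eq_add_neg, ← smul_sub,
    sandwich_single_sub_sub_sandwich_single_add, smul_smul,
    show (2⁻¹ : ℂ) * -2 = -1 by norm_num, neg_one_smul]

theorem sandwich_unitary_diag (A : Matrix n n ℂ) (t : n) :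
    (Complex.I • single t t (1 : ℂ)) * A * (Complex.I • single t t (1 : ℂ))ᵀ
      = -single t t (A t t) := by
  rw [smul_mul_mul_transpose_smul, Complex.I_mul_I, transpose_single, single_mul_mul_single]
  simp

end Matrix

/-- for the standard orthonormal basis `B` of `u(n)` and any
`A ∈ ℂ^{n×n}`, `∑_{Z ∈ B} Z·A·Zᵀ = −Aᵀ`. -/
theorem conformality_un (n : ℕ) (A : Matrix (Fin n) (Fin n) ℂ) :
    (∑ p ∈ Finset.univ.filter (fun p : Fin n × Fin n => p.1 < p.2),
        (((Real.sqrt 2 : ℂ)⁻¹ •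
            (Matrix.single p.1 p.2 (1 : ℂ) - Matrix.single p.2 p.1 (1 : ℂ))) * A *
          ((Real.sqrt 2 : ℂ)⁻¹ •
            (Matrix.single p.1 p.2 (1 : ℂ) - Matrix.single p.2 p.1 (1 : ℂ)))ᵀ
        + ((Real.sqrt 2 : ℂ)⁻¹ • Complex.I •
            (Matrix.single p.1 p.2 (1 : ℂ) + Matrix.single p.2 p.1 (1 : ℂ))) * A *
          ((Real.sqrt 2 : ℂ)⁻¹ • Complex.I •
            (Matrix.single p.1 p.2 (1 : ℂ) + Matrix.single p.2 p.1 (1 : ℂ)))ᵀ))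
    + ∑ t : Fin n, (Complex.I • Matrix.single t t (1 : ℂ)) * A *
        (Complex.I • Matrix.single t t (1 : ℂ))ᵀ
    = -Aᵀ := by
  rw [Finset.sum_congr rfl fun p _ => sandwich_unitary_offDiag_pair A p.1 p.2,
    Finset.sum_congr rfl fun t _ => sandwich_unitary_diag A t, Finset.sum_neg_distrib,
    Finset.sum_neg_distrib, ← neg_add, transpose_eq_sum_single,
    Fintype.sum_prod_eq_sum_lt_add_sum_diag]
  rfl
end

section
/- Let B⁺ be the orthonormal basis of u(n) given by B⁺ = { (E_{rs}−E_{sr})/√2, i(E_{rs}+E_{sr})/√2 : 1 ≤ r < s ≤ n } ∪ { i E_{tt} : 1 ≤ t ≤ n }, and let B⁻ = i·B⁺ = { iZ : Z ∈ B⁺ }. Then ∑_{Z ∈ B⁺} Z² − ∑_{Z ∈ B⁻} Z² = −2n · Iₙ. -/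
/-!
Since `(i Z)² = -Z²`, the signed sum is twice `∑_{Z ∈ B⁺} Z²`. For `A = E_rs`, `B = E_sr` one has
`(A - B)² + (i(A + B))² = -2 (AB + BA) = -2 (E_rr + E_ss)`, so each pair `r < s` contributes
`-(E_rr + E_ss)` and each `t` contributes `(i E_tt)² = -E_tt`. Every index lies in `n - 1` pairs
and on the diagonal once, so `∑_{Z ∈ B⁺} Z² = -n Iₙ`.
-/

open Matrix

theorem Finset.sum_filter_lt_add_add_sum_eq_card_smul {ι M : Type*} [LinearOrder ι] [Fintype ι]
    [AddCommMonoid M] (f : ι → M) :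
    ∑ p ∈ Finset.univ.filter (fun p : ι × ι => p.1 < p.2), (f p.1 + f p.2) + ∑ i, f i
      = Fintype.card ι • ∑ i, f i := by
  have hswap : ∑ p ∈ Finset.univ.filter (fun p : ι × ι => p.1 < p.2), f p.2
      = ∑ p ∈ Finset.univ.filter (fun p : ι × ι => p.2 < p.1), f p.1 :=
    Finset.sum_nbij' Prod.swap Prod.swap (by simp) (by simp) (by simp) (by simp) (by simp)
  have hdiag : ∑ i, f i = ∑ p ∈ Finset.univ.filter (fun p : ι × ι => p.1 = p.2), f p.1 := by
    rw [Finset.sum_filter, Fintype.sum_prod_type]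
    simp
  have htrichotomy : ∀ p : ι × ι, f p.1 = (if p.1 < p.2 then f p.1 else 0)
      + (if p.2 < p.1 then f p.1 else 0) + (if p.1 = p.2 then f p.1 else 0) := by
    rintro ⟨a, b⟩
    rcases lt_trichotomy a b with h | rfl | h
    · simp [h, h.not_gt, h.ne]
    · simp
    · simp [h, h.not_gt, h.ne']
  calc ∑ p ∈ Finset.univ.filter (fun p : ι × ι => p.1 < p.2), (f p.1 + f p.2) + ∑ i, f i
      = ∑ p ∈ Finset.univ.filter (fun p : ι × ι => p.1 < p.2), f p.1
          + ∑ p ∈ Finset.univ.filter (fun p : ι × ι => p.2 < p.1), f p.1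
          + ∑ p ∈ Finset.univ.filter (fun p : ι × ι => p.1 = p.2), f p.1 := by
        rw [Finset.sum_add_distrib, hswap, hdiag]
    _ = ∑ p : ι × ι, f p.1 := by
        simp only [Finset.sum_filter, ← Finset.sum_add_distrib]
        exact Finset.sum_congr rfl fun p _ => (htrichotomy p).symm
    _ = Fintype.card ι • ∑ i, f i := by
        rw [Fintype.sum_prod_type]
        simp [Finset.smul_sum]

section

variable {A : Type*} [Ring A] [Algebra ℂ A]

theorem Complex.I_smul_sq (M : A) : (Complex.I • M) ^ 2 = -M ^ 2 := by
  rw [smul_pow, Complex.I_sq, neg_one_smul]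

theorem Complex.sq_sub_add_sq_I_smul_add (X Y : A) :
    (X - Y) ^ 2 + (Complex.I • (X + Y)) ^ 2 = -(2 : ℂ) • (X * Y + Y * X) := by
  rw [Complex.I_smul_sq, neg_smul, two_smul]
  noncomm_ring

theorem Complex.sum_sq_sub_sum_I_smul_sq {κ ι : Type*} (s : Finset κ) (t : Finset ι)
    (X Y : κ → A) (W : ι → A) :
    (∑ p ∈ s, (X p ^ 2 + Y p ^ 2) + ∑ i ∈ t, W i ^ 2)
      - (∑ p ∈ s, ((Complex.I • X p) ^ 2 + (Complex.I • Y p) ^ 2) + ∑ i ∈ t, (Complex.I • W i) ^ 2)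
      = (2 : ℂ) • (∑ p ∈ s, (X p ^ 2 + Y p ^ 2) + ∑ i ∈ t, W i ^ 2) := by
  simp only [Complex.I_smul_sq, ← neg_add, Finset.sum_neg_distrib]
  module

end

theorem Complex.inv_ofReal_sqrt_two_sq : ((Real.sqrt 2 : ℂ)⁻¹) ^ 2 = 2⁻¹ := by
  rw [inv_pow, ← Complex.ofReal_pow, Real.sq_sqrt zero_le_two]
  push_cast
  rfl

theorem Matrix.sq_inv_sqrt_two_smul_single_sub_add {m : Type*} [Fintype m] [DecidableEq m]
    (r s : m) :
    ((Real.sqrt 2 : ℂ)⁻¹ • (single r s (1 : ℂ) - single s r 1)) ^ 2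
      + ((Real.sqrt 2 : ℂ)⁻¹ • Complex.I • (single r s (1 : ℂ) + single s r 1)) ^ 2
      = -(single r r 1 + single s s 1) := by
  rw [smul_pow, smul_pow, ← smul_add, Complex.sq_sub_add_sq_I_smul_add, single_mul_single_same,
    single_mul_single_same, one_mul, smul_smul, Complex.inv_ofReal_sqrt_two_sq]
  module

/-- with `B⁺` the standard orthonormal basis of `u(n)` and `B⁻ = i·B⁺`,
`∑_{Z ∈ B⁺} Z² − ∑_{Z ∈ B⁻} Z² = −2n·Iₙ`. -/
theorem casimir_glnC (n : ℕ) :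
    ((∑ p ∈ Finset.univ.filter (fun p : Fin n × Fin n => p.1 < p.2),
        (((Real.sqrt 2 : ℂ)⁻¹ •
          (Matrix.single p.1 p.2 (1 : ℂ) - Matrix.single p.2 p.1 (1 : ℂ))) ^ 2
        + ((Real.sqrt 2 : ℂ)⁻¹ • Complex.I •
          (Matrix.single p.1 p.2 (1 : ℂ) + Matrix.single p.2 p.1 (1 : ℂ))) ^ 2))
      + ∑ t : Fin n, (Complex.I • Matrix.single t t (1 : ℂ)) ^ 2)
    - ((∑ p ∈ Finset.univ.filter (fun p : Fin n × Fin n => p.1 < p.2),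
        ((Complex.I • ((Real.sqrt 2 : ℂ)⁻¹ •
          (Matrix.single p.1 p.2 (1 : ℂ) - Matrix.single p.2 p.1 (1 : ℂ)))) ^ 2
        + (Complex.I • ((Real.sqrt 2 : ℂ)⁻¹ • Complex.I •
          (Matrix.single p.1 p.2 (1 : ℂ) + Matrix.single p.2 p.1 (1 : ℂ)))) ^ 2))
      + ∑ t : Fin n, (Complex.I • Complex.I • Matrix.single t t (1 : ℂ)) ^ 2)
    = (-(2 * n : ℂ)) • (1 : Matrix (Fin n) (Fin n) ℂ) := by
  rw [Complex.sum_sq_sub_sum_I_smul_sq]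
  simp only [Matrix.sq_inv_sqrt_two_smul_single_sub_add, Complex.I_smul_sq]
  simp only [sq, single_mul_single_same, mul_one, Finset.sum_neg_distrib, ← neg_add]
  rw [Finset.sum_filter_lt_add_add_sum_eq_card_smul fun t => single t t (1 : ℂ), sum_single_one,
    Fintype.card_fin]
  module
end

section
/- Let B⁺ be the set of 2n×2n complex matrices consisting of: (1/√2)[[0, iX_{rs}],[iX_{rs}, 0]], (1/√2)[[0, X_{rs}],[−X_{rs}, 0]], (1/√2)[[iX_{rs}, 0],[0, −iX_{rs}]], (1/√2)[[Y_{rs}, 0],[0, Y_{rs}]] for 1 ≤ r < s ≤ n, together with (1/√2)[[0, D_t],[−D_t, 0]], (1/√2)[[iD_t, 0],[0, −iD_t]], (1/√2)[[0, iD_t],[iD_t, 0]] for 1 ≤ t ≤ n, where X_{rs} = (E_{rs}+E_{sr})/√2, Y_{rs} = (E_{rs}−E_{sr})/√2, D_t = E_{tt}. Then ∑_{Z ∈ B⁺} Z² = −((2n+1)/2) · I_{2n}. -/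
/-!
Every element of `B⁺` is `1/√2` times a block matrix whose blocks are multiples of `X_{rs}`,
`Y_{rs}` or `D_t`, placed either on the diagonal or off it; in both cases its square is
block-diagonal. Since `X_{rs}² = (E_{rr} + E_{ss})/2 = -Y_{rs}²` for `r ≠ s` and `D_t² = D_t`,
the four elements attached to a pair `r < s` contribute `-(E_{rr} + E_{ss})` to each diagonal
block and the three attached to `t` contribute `-(3/2) E_{tt}`. Each index lies in `n - 1` pairs,
so the sum is `-(n - 1 + 3/2) I = -((2n + 1)/2) I`.
-/

open Matrix

/-- `X_{rs} = (E_{rs}+E_{sr})/√2` -/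
noncomputable def Xm (n : ℕ) (r s : Fin n) : Matrix (Fin n) (Fin n) ℂ :=
  (Real.sqrt 2 : ℂ)⁻¹ • (Matrix.single r s (1 : ℂ) + Matrix.single s r (1 : ℂ))

/-- `Y_{rs} = (E_{rs}−E_{sr})/√2` -/
noncomputable def Ym (n : ℕ) (r s : Fin n) : Matrix (Fin n) (Fin n) ℂ :=
  (Real.sqrt 2 : ℂ)⁻¹ • (Matrix.single r s (1 : ℂ) - Matrix.single s r (1 : ℂ))

/-- `D_t = E_{tt}` -/
def Dm (n : ℕ) (t : Fin n) : Matrix (Fin n) (Fin n) ℂ := Matrix.single t t (1 : ℂ)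

namespace Matrix

variable {l m n o ι α : Type*}

theorem fromBlocks_sum [AddCommMonoid α] (s : Finset ι) (A : ι → Matrix n l α)
    (B : ι → Matrix n m α) (C : ι → Matrix o l α) (D : ι → Matrix o m α) :
    ∑ i ∈ s, fromBlocks (A i) (B i) (C i) (D i)
      = fromBlocks (∑ i ∈ s, A i) (∑ i ∈ s, B i) (∑ i ∈ s, C i) (∑ i ∈ s, D i) := by
  induction s using Finset.cons_induction with
  | empty => simp [fromBlocks_zero]
  | cons a s ha ih => simp only [Finset.sum_cons, ih, fromBlocks_add]

variable [Fintype l] [Fintype m] [DecidableEq l] [DecidableEq m] [Semiring α]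

theorem fromBlocks_zero₁₁_zero₂₂_sq (B : Matrix l m α) (C : Matrix m l α) :
    fromBlocks 0 B C 0 ^ 2 = fromBlocks (B * C) 0 0 (C * B) := by
  simp [sq, fromBlocks_multiply]

theorem fromBlocks_zero₁₂_zero₂₁_sq (A : Matrix l l α) (D : Matrix m m α) :
    fromBlocks A 0 0 D ^ 2 = fromBlocks (A * A) 0 0 (D * D) := by
  simp [sq, fromBlocks_multiply]

end Matrix

theorem Finset.sum_filter_lt_add_add_sum {ι M : Type*} [LinearOrder ι] [Fintype ι]
    [AddCommMonoid M] (f : ι → M) :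
    ∑ p ∈ univ.filter (fun p : ι × ι => p.1 < p.2), (f p.1 + f p.2) + ∑ i, f i
      = Fintype.card ι • ∑ i, f i := by
  have hswap : ∑ p ∈ univ.filter (fun p : ι × ι => p.1 < p.2), f p.2
      = ∑ p ∈ univ.filter (fun p : ι × ι => p.2 < p.1), f p.1 :=
    Finset.sum_equiv (Equiv.prodComm ι ι) (by simp) (by simp)
  have hsplit : ∀ p : ι × ι, f p.1 = ((if p.1 < p.2 then f p.1 else 0)
      + if p.2 < p.1 then f p.1 else 0) + if p.2 = p.1 then f p.1 else 0 := by
    intro ⟨i, j⟩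
    rcases lt_trichotomy i j with h | rfl | h
    · simp [h, h.not_gt, h.ne']
    · simp
    · simp [h, h.not_gt, h.ne]
  have hdiag : ∑ p : ι × ι, (if p.2 = p.1 then f p.1 else 0) = ∑ i, f i := by
    simp [Fintype.sum_prod_type]
  calc ∑ p ∈ univ.filter (fun p : ι × ι => p.1 < p.2), (f p.1 + f p.2) + ∑ i, f i
      = ∑ p : ι × ι, f p.1 := by
        rw [sum_add_distrib, hswap, sum_filter, sum_filter, ← hdiag, ← sum_add_distrib,
          ← sum_add_distrib]
        exact sum_congr rfl fun p _ => (hsplit p).symm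
    _ = Fintype.card ι • ∑ i, f i := by simp [Fintype.sum_prod_type, smul_sum]

section

variable {n : ℕ} {r s : Fin n}

theorem Xm_mul_self (h : r ≠ s) :
    Xm n r s * Xm n r s = (2⁻¹ : ℂ) • (single r r 1 + single s s 1) := by
  rw [Xm, smul_mul_smul, ← sq, Complex.inv_ofReal_sqrt_two_sq, add_mul, mul_add, mul_add,
    single_mul_single_of_ne 1 r s r h.symm, single_mul_single_of_ne 1 s r s h,
    single_mul_single_same, single_mul_single_same, mul_one]
  module

theorem Ym_mul_self (h : r ≠ s) :
    Ym n r s * Ym n r s = (-2⁻¹ : ℂ) • (single r r 1 + single s s 1) := by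
  rw [Ym, smul_mul_smul, ← sq, Complex.inv_ofReal_sqrt_two_sq, sub_mul, mul_sub, mul_sub,
    single_mul_single_of_ne 1 r s r h.symm, single_mul_single_of_ne 1 s r s h,
    single_mul_single_same, single_mul_single_same, mul_one]
  module

theorem Dm_mul_self (t : Fin n) : Dm n t * Dm n t = Dm n t := by
  simp [Dm]

theorem sum_sq_basis_pair (h : r ≠ s) :
    ((Real.sqrt 2 : ℂ)⁻¹ •
        fromBlocks 0 (Complex.I • Xm n r s) (Complex.I • Xm n r s) 0) ^ 2
    + ((Real.sqrt 2 : ℂ)⁻¹ •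
        fromBlocks 0 (Xm n r s) (-(Xm n r s)) 0) ^ 2
    + ((Real.sqrt 2 : ℂ)⁻¹ •
        fromBlocks (Complex.I • Xm n r s) 0 0 (-(Complex.I • Xm n r s))) ^ 2
    + ((Real.sqrt 2 : ℂ)⁻¹ •
        fromBlocks (Ym n r s) 0 0 (Ym n r s)) ^ 2
    = -fromBlocks (single r r 1 + single s s 1) 0 0 (single r r 1 + single s s 1) := by
  simp only [smul_pow, Complex.inv_ofReal_sqrt_two_sq, fromBlocks_zero₁₁_zero₂₂_sq,
    fromBlocks_zero₁₂_zero₂₁_sq, smul_mul_smul, Complex.I_mul_I, mul_neg, neg_mul,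
    Xm_mul_self h, Ym_mul_self h]
  simp only [fromBlocks_smul, fromBlocks_neg, fromBlocks_add, smul_zero, neg_zero, add_zero]
  congr 1 <;> module

theorem sum_sq_basis_diag (t : Fin n) :
    ((Real.sqrt 2 : ℂ)⁻¹ • fromBlocks 0 (Dm n t) (-(Dm n t)) 0) ^ 2
    + ((Real.sqrt 2 : ℂ)⁻¹ •
        fromBlocks (Complex.I • Dm n t) 0 0 (-(Complex.I • Dm n t))) ^ 2
    + ((Real.sqrt 2 : ℂ)⁻¹ •
        fromBlocks 0 (Complex.I • Dm n t) (Complex.I • Dm n t) 0) ^ 2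
    = (-(3 / 2) : ℂ) • fromBlocks (Dm n t) 0 0 (Dm n t) := by
  simp only [smul_pow, Complex.inv_ofReal_sqrt_two_sq, fromBlocks_zero₁₁_zero₂₂_sq,
    fromBlocks_zero₁₂_zero₂₁_sq, smul_mul_smul, Complex.I_mul_I, mul_neg, neg_mul,
    Dm_mul_self]
  simp only [fromBlocks_smul, fromBlocks_add, smul_zero, add_zero]
  congr 1 <;> module

end

/-- the sum of squares of the standard orthonormal basis `B⁺` of
the compact symplectic Lie algebra `sp(n) ⊂ ℂ^{2n×2n}` equals `−((2n+1)/2)·I_{2n}`. -/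
theorem casimir_spn (n : ℕ) :
    (∑ p ∈ Finset.univ.filter (fun p : Fin n × Fin n => p.1 < p.2),
      (((Real.sqrt 2 : ℂ)⁻¹ •
          fromBlocks 0 (Complex.I • Xm n p.1 p.2) (Complex.I • Xm n p.1 p.2) 0) ^ 2
      + ((Real.sqrt 2 : ℂ)⁻¹ •
          fromBlocks 0 (Xm n p.1 p.2) (-(Xm n p.1 p.2)) 0) ^ 2
      + ((Real.sqrt 2 : ℂ)⁻¹ •
          fromBlocks (Complex.I • Xm n p.1 p.2) 0 0 (-(Complex.I • Xm n p.1 p.2))) ^ 2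
      + ((Real.sqrt 2 : ℂ)⁻¹ •
          fromBlocks (Ym n p.1 p.2) 0 0 (Ym n p.1 p.2)) ^ 2))
    + ∑ t : Fin n,
      (((Real.sqrt 2 : ℂ)⁻¹ • fromBlocks 0 (Dm n t) (-(Dm n t)) 0) ^ 2
      + ((Real.sqrt 2 : ℂ)⁻¹ •
          fromBlocks (Complex.I • Dm n t) 0 0 (-(Complex.I • Dm n t))) ^ 2
      + ((Real.sqrt 2 : ℂ)⁻¹ •
          fromBlocks 0 (Complex.I • Dm n t) (Complex.I • Dm n t) 0) ^ 2)
    = (-((2 * (n : ℂ) + 1) / 2)) • (1 : Matrix (Fin n ⊕ Fin n) (Fin n ⊕ Fin n) ℂ) := by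
  have hD : ∑ t, Dm n t = 1 := sum_single_one
  have hP : ∑ p ∈ Finset.univ.filter (fun p : Fin n × Fin n => p.1 < p.2),
      (single p.1 p.1 (1 : ℂ) + single p.2 p.2 1) = (n : ℂ) • 1 - 1 := by
    have h := Finset.sum_filter_lt_add_add_sum fun i : Fin n => single i i (1 : ℂ)
    rw [sum_single_one, Fintype.card_fin, ← Nat.cast_smul_eq_nsmul ℂ] at h
    exact eq_sub_of_add_eq h
  rw [Finset.sum_congr rfl fun p hp => sum_sq_basis_pair (Finset.mem_filter.mp hp).2.ne,
    Finset.sum_congr rfl fun t _ => sum_sq_basis_diag t, Finset.sum_neg_distrib,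
    ← Finset.smul_sum, fromBlocks_sum, fromBlocks_sum, hP, hD, ← fromBlocks_one]
  simp only [Finset.sum_const_zero, fromBlocks_smul, fromBlocks_neg, fromBlocks_add, smul_zero,
    neg_zero, add_zero]
  congr 1 <;> module
end

section
/- Let A be a commutative ℂ-algebra, τ : A → A ℂ-linear and κ : A × A → A symmetric ℂ-bilinear with τ(φψ) = τ(φ)ψ + 2κ(φ,ψ) + φτ(ψ) and κ(φψ, χ) = φκ(ψ,χ) + ψκ(φ,χ). If φ ∈ A satisfies τ(φ) = λφ and κ(φ,φ) = μφ² for some λ, μ ∈ ℂ, then for every positive integer d: τ(φ^d) = (dλ + d(d−1)μ)·φ^d and κ(φ^d, φ^d) = d²μ·φ^{2d}. -/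
/-!
Each `κ (·) z` is a derivation, so `κ (φ ^ n) z = n φ ^ (n - 1) κ φ z`; with symmetry this computes
`κ (φ ^ a) (φ ^ b) = a b μ φ ^ (a + b)`. Feeding `κ (φ ^ n) φ = n μ φ ^ (n + 1)` into the product rule
for `τ (φ ^ n * φ)` gives the recursion `c (n + 1) = c n + λ + 2 n μ` for the eigenvalue of `φ ^ n`.
The Leibniz rules force `κ 1 z = 0` and `τ 1 = 0`, which start both inductions at `n = 0`.
-/

section Leibniz

variable {R A : Type*} [CommRing R] [CommRing A] [Algebra R A] {τ : A → A} {κ : A → A → A}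

theorem leibniz_one_left
    (hκ : ∀ x y z : A, κ (x * y) z = x * κ y z + y * κ x z) (z : A) : κ 1 z = 0 := by
  have h := hκ 1 1 z
  rw [one_mul, one_mul] at h
  linear_combination -h

theorem leibniz_pow_left
    (hκ : ∀ x y z : A, κ (x * y) z = x * κ y z + y * κ x z)
    {φ z w : A} {c : R} (hz : κ φ z = c • (φ * w)) (n : ℕ) :
    κ (φ ^ n) z = ((n : R) * c) • (φ ^ n * w) := by
  induction n with
  | zero => simp [leibniz_one_left hκ]
  | succ n ih =>
    rw [pow_succ, hκ, hz, ih]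
    push_cast
    simp only [Algebra.smul_def, map_mul, map_add, map_one, map_natCast]
    ring

theorem leibniz_eigen_pow_pow
    (hsymm : ∀ x y : A, κ x y = κ y x)
    (hκ : ∀ x y z : A, κ (x * y) z = x * κ y z + y * κ x z)
    {φ : A} {μ : R} (hφ : κ φ φ = μ • φ ^ 2) (a b : ℕ) :
    κ (φ ^ a) (φ ^ b) = ((a : R) * b * μ) • φ ^ (a + b) := by
  have hb : κ φ (φ ^ b) = ((b : R) * μ) • (φ * φ ^ b) := by
    rw [hsymm, leibniz_pow_left hκ (w := φ) (by rw [hφ, sq]), mul_comm (φ ^ b)]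
  rw [leibniz_pow_left hκ hb, ← mul_assoc, pow_add]

theorem tau_one
    (hτ : ∀ x y : A, τ (x * y) = τ x * y + 2 * κ x y + x * τ y)
    (hκ : ∀ x y z : A, κ (x * y) z = x * κ y z + y * κ x z) : τ 1 = 0 := by
  have h := hτ 1 1
  rw [mul_one, one_mul, leibniz_one_left hκ] at h
  linear_combination -h

theorem tau_eigen_pow
    (hτ : ∀ x y : A, τ (x * y) = τ x * y + 2 * κ x y + x * τ y)
    (hκ : ∀ x y z : A, κ (x * y) z = x * κ y z + y * κ x z)
    {φ : A} {l μ : R} (hτφ : τ φ = l • φ) (hκφ : κ φ φ = μ • φ ^ 2) (n : ℕ) :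
    τ (φ ^ n) = ((n : R) * l + n * (n - 1) * μ) • φ ^ n := by
  induction n with
  | zero => simp [tau_one hτ hκ]
  | succ n ih =>
    have hn : κ (φ ^ n) φ = ((n : R) * μ) • φ ^ (n + 1) := by
      rw [leibniz_pow_left hκ (w := φ) (by rw [hκφ, sq]), pow_succ]
    rw [pow_succ, hτ, ih, hn, hτφ]
    push_cast
    simp only [Algebra.smul_def, map_add, map_sub, map_mul, map_one, map_natCast]
    ring

end Leibniz

theorem eigen_power_general (A : Type*) [CommRing A] [Algebra ℂ A]
    (τ : A →ₗ[ℂ] A) (κ : A →ₗ[ℂ] A →ₗ[ℂ] A)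
    (hsymm : ∀ x y : A, κ x y = κ y x)
    (hτ : ∀ x y : A, τ (x * y) = τ x * y + 2 * κ x y + x * τ y)
    (hκ : ∀ x y z : A, κ (x * y) z = x * κ y z + y * κ x z)
    (φ : A) (lam mu : ℂ)
    (h1 : τ φ = lam • φ) (h2 : κ φ φ = mu • (φ ^ 2))
    (d : ℕ) :
    τ (φ ^ d) = ((d : ℂ) * lam + (d : ℂ) * ((d : ℂ) - 1) * mu) • (φ ^ d) ∧
    κ (φ ^ d) (φ ^ d) = ((d : ℂ) ^ 2 * mu) • (φ ^ (2 * d)) := by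
  refine ⟨tau_eigen_pow (κ := fun x y => κ x y) hτ hκ h1 h2 d, ?_⟩
  rw [leibniz_eigen_pow_pow (κ := fun x y => κ x y) hsymm hκ h2, sq, two_mul]

/-- powers of an eigenfunction with eigenvalues `(λ, μ)` satisfy
`τ(φ^d) = (dλ + d(d−1)μ)·φ^d` and `κ(φ^d, φ^d) = d²μ·φ^{2d}`. -/
theorem eigen_power (A : Type*) [CommRing A] [Algebra ℂ A]
    (τ : A →ₗ[ℂ] A) (κ : A →ₗ[ℂ] A →ₗ[ℂ] A)
    (hsymm : ∀ x y : A, κ x y = κ y x)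
    (hτ : ∀ x y : A, τ (x * y) = τ x * y + 2 * κ x y + x * τ y)
    (hκ : ∀ x y z : A, κ (x * y) z = x * κ y z + y * κ x z)
    (φ : A) (lam mu : ℂ)
    (h1 : τ φ = lam • φ) (h2 : κ φ φ = mu • (φ ^ 2))
    (d : ℕ) (hd : 0 < d) :
    τ (φ ^ d) = ((d : ℂ) * lam + (d : ℂ) * ((d : ℂ) - 1) * mu) • (φ ^ d) ∧
    κ (φ ^ d) (φ ^ d) = ((d : ℂ) ^ 2 * mu) • (φ ^ (2 * d)) :=
  eigen_power_general A τ κ hsymm hτ hκ φ lam mu h1 h2 d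
end

section
/- Let A be a commutative ℂ-algebra, τ : A → A ℂ-linear and κ : A × A → A symmetric bilinear satisfying τ(φψ) = τ(φ)ψ + 2κ(φ,ψ) + φτ(ψ) and κ(φψ,χ) = φκ(ψ,χ) + ψκ(φ,χ). Suppose P, Q ∈ A and λ̃, μ̃ ∈ ℂ satisfy τ(P) = λ̃P, τ(Q) = λ̃Q, κ(P,P) = μ̃P², κ(P,Q) = μ̃PQ, κ(Q,Q) = μ̃Q². If Q is invertible in A, then the quotient h = P·Q^{−1} satisfies τ(h) = 0 and κ(h,h) = 0. -/
/-!
Write `P = h Q` with `h = P Q⁻¹` and expand `τ(P)`, `κ(P, Q)`, `κ(P, P)` by the Leibniz rules.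
Since `P` and `Q` carry the same eigenvalues, the terms with `τ(Q)` and `κ(Q, Q)` cancel against
the left-hand sides, leaving `Q κ(h, Q) = 0`, then `Q τ(h) = 0` and `Q² κ(h, h) = 0`; `Q` is a unit.
-/

theorem kappa_mul_mul_self {A : Type*} [CommSemiring A] {κ : A → A → A}
    (hsymm : ∀ x y, κ x y = κ y x) (hκ : ∀ x y z, κ (x * y) z = x * κ y z + y * κ x z)
    (x y : A) :
    κ (x * y) (x * y) = x ^ 2 * κ y y + 2 * (x * y) * κ x y + y ^ 2 * κ x x := by
  rw [hκ, hsymm y, hsymm x, hκ, hκ, hsymm y x]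
  ring

/-- the quotient of two eigenfunctions with the same eigenvalues
`(λ̃, μ̃)` is harmonic and horizontally conformal: `τ(PQ⁻¹) = 0`, `κ(PQ⁻¹,PQ⁻¹) = 0`. -/
theorem eigen_quotient (A : Type*) [CommRing A] [Algebra ℂ A]
    (τ : A →ₗ[ℂ] A) (κ : A →ₗ[ℂ] A →ₗ[ℂ] A)
    (hsymm : ∀ x y : A, κ x y = κ y x)
    (hτ : ∀ x y : A, τ (x * y) = τ x * y + 2 * κ x y + x * τ y)
    (hκ : ∀ x y z : A, κ (x * y) z = x * κ y z + y * κ x z)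
    (P Q : A) (tlam tmu : ℂ)
    (h1 : τ P = tlam • P) (h2 : τ Q = tlam • Q)
    (h3 : κ P P = tmu • (P ^ 2)) (h4 : κ P Q = tmu • (P * Q))
    (h5 : κ Q Q = tmu • (Q ^ 2))
    (Qi : A) (hQ : Q * Qi = 1) :
    τ (P * Qi) = 0 ∧ κ (P * Qi) (P * Qi) = 0 := by
  have hQu : IsUnit Q := .of_mul_eq_one Qi hQ
  set h := P * Qi
  have hP : P = h * Q := by rw [mul_assoc, mul_comm Qi, hQ, mul_one]
  simp only [Algebra.smul_def] at h1 h2 h3 h4 h5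
  rw [hP] at h1 h3 h4
  have hκhQ : κ h Q = 0 := by
    rw [hκ, h5] at h4
    exact hQu.mul_right_eq_zero.mp (by linear_combination h4)
  have hτh : τ h = 0 := by
    rw [hτ, h2, hκhQ] at h1
    exact hQu.mul_right_eq_zero.mp (by linear_combination h1)
  refine ⟨hτh, ?_⟩
  rw [kappa_mul_mul_self hsymm hκ, h5, hκhQ] at h3
  exact (hQu.pow 2).mul_right_eq_zero.mp (by linear_combination h3)
end
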